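/- arXiv:2108.07218 — 2 statements merged into one kernel-verified Lean document; each statement's English description precedes it below -/
import Mathlib

section
/- With γ₁ < −1 < 0 < γ₂ the roots of γ(γ−θ) = 1/(Nρ) and U*(a) = (γ₂ e^{−γ₁(a*−a)} − γ₁ e^{−γ₂(a*−a)})/(γ₂−γ₁), the function U* is strictly decreasing on [0, a*) and satisfies U*(a) > 1 for all a ∈ [0, a*). -/
/-!
`U*(a*) = 1`, and `U*' (a) = γ₁ γ₂ (e^{-γ₁(a*-a)} - e^{-γ₂(a*-a)}) / (γ₂ - γ₁)` is negative for
`a < a*` because `γ₁ < 0 < γ₂`; so `U*` decreases strictly on `(-∞, a*]` down to the value `1`.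
-/

/-- The cooperative stopping cutoff `a*`. -/
noncomputable def astarDef (γ₁ γ₂ : ℝ) : ℝ :=
  (Real.log (1 + 1 / γ₂) - Real.log (1 + 1 / γ₁)) / (γ₂ - γ₁)

/-- The cooperative normalized value on the exploration region. -/
noncomputable def UstarDef (γ₁ γ₂ astar : ℝ) (a : ℝ) : ℝ :=
  (γ₂ * Real.exp (-γ₁ * (astar - a)) - γ₁ * Real.exp (-γ₂ * (astar - a))) / (γ₂ - γ₁)

section UstarDef

variable {γ₁ γ₂ : ℝ}

theorem UstarDef_self (h : γ₁ ≠ γ₂) (s : ℝ) : UstarDef γ₁ γ₂ s s = 1 := by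
  rw [UstarDef, sub_self, mul_zero, mul_zero, Real.exp_zero, mul_one, mul_one,
    div_self (sub_ne_zero.2 h.symm)]

theorem hasDerivAt_UstarDef (γ₁ γ₂ s x : ℝ) :
    HasDerivAt (UstarDef γ₁ γ₂ s)
      (γ₁ * γ₂ * (Real.exp (-γ₁ * (s - x)) - Real.exp (-γ₂ * (s - x))) / (γ₂ - γ₁)) x := by
  have hexp (γ : ℝ) : HasDerivAt (fun a => Real.exp (-γ * (s - a)))
      (Real.exp (-γ * (s - x)) * (-γ * -1)) x :=
    (((hasDerivAt_id x).const_sub s).const_mul (-γ)).exp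
  exact ((((hexp γ₁).const_mul γ₂).sub ((hexp γ₂).const_mul γ₁)).div_const (γ₂ - γ₁)).congr_deriv
    (by ring)

theorem strictAntiOn_UstarDef (hγ₁ : γ₁ < 0) (hγ₂ : 0 < γ₂) (s : ℝ) :
    StrictAntiOn (UstarDef γ₁ γ₂ s) (Set.Iic s) := by
  refine strictAntiOn_of_deriv_neg (convex_Iic s)
    (fun x _ => (hasDerivAt_UstarDef γ₁ γ₂ s x).continuousAt.continuousWithinAt) fun x hx => ?_
  rw [interior_Iic, Set.mem_Iio] at hx
  have hexp_lt : Real.exp (-γ₂ * (s - x)) < Real.exp (-γ₁ * (s - x)) :=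
    Real.exp_lt_exp.2 (by nlinarith [sub_pos.2 hx])
  rw [(hasDerivAt_UstarDef γ₁ γ₂ s x).deriv]
  exact div_neg_of_neg_of_pos
    (mul_neg_of_neg_of_pos (mul_neg_of_neg_of_pos hγ₁ hγ₂) (sub_pos.2 hexp_lt)) (by linarith)

theorem one_lt_UstarDef (hγ₁ : γ₁ < 0) (hγ₂ : 0 < γ₂) {s a : ℝ} (ha : a < s) :
    1 < UstarDef γ₁ γ₂ s a := by
  have h := strictAntiOn_UstarDef hγ₁ hγ₂ s (Set.mem_Iic.2 ha.le) Set.self_mem_Iic ha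
  rwa [UstarDef_self (by linarith)] at h

end UstarDef

theorem cooperative_value_decreasing_general (γ₁ γ₂ : ℝ)
    (hγ₁ : γ₁ < -1) (hγ₂ : 0 < γ₂) :
    StrictAntiOn (UstarDef γ₁ γ₂ (astarDef γ₁ γ₂)) (Set.Ico 0 (astarDef γ₁ γ₂)) ∧
    ∀ a ∈ Set.Ico 0 (astarDef γ₁ γ₂), 1 < UstarDef γ₁ γ₂ (astarDef γ₁ γ₂) a := by
  have hγ₁_neg : γ₁ < 0 := by linarith
  exact ⟨(strictAntiOn_UstarDef hγ₁_neg hγ₂ _).mono fun a ha => Set.mem_Iic.2 ha.2.le,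
    fun a ha => one_lt_UstarDef hγ₁_neg hγ₂ ha.2⟩

/-- `U*` is strictly decreasing on `[0, a*)` and `U*(a) > 1` there. -/
theorem cooperative_value_decreasing (N ρ θ γ₁ γ₂ : ℝ) (hN : 1 ≤ N) (hρ : 0 < ρ)
    (hmain : N * ρ * (1 + θ) < 1)
    (hγ₁ : γ₁ < -1) (hγ₂ : 0 < γ₂)
    (hroot1 : γ₁ * (γ₁ - θ) = 1 / (N * ρ))
    (hroot2 : γ₂ * (γ₂ - θ) = 1 / (N * ρ)) :
    StrictAntiOn (UstarDef γ₁ γ₂ (astarDef γ₁ γ₂)) (Set.Ico 0 (astarDef γ₁ γ₂)) ∧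
    ∀ a ∈ Set.Ico 0 (astarDef γ₁ γ₂), 1 < UstarDef γ₁ γ₂ (astarDef γ₁ γ₂) a :=
  cooperative_value_decreasing_general γ₁ γ₂ hγ₁ hγ₂
end

section
/- Fix ρ > 0, θ ∈ ℝ. For N₁ < N₂ with N₂ρ(1+θ) < 1, the cooperative normalized payoff functions satisfy U*_{N₁}(a) ≤ U*_{N₂}(a) for all a ≥ 0, where U*_N is given by U*_N(a) = (γ₂e^{−γ₁(a*_N − a)} − γ₁e^{−γ₂(a*_N − a)})/(γ₂ − γ₁) on [0, a*_N) and U*_N(a) = 1 for a ≥ a*_N, with γ₁ < γ₂ the roots of γ(γ−θ) = 1/(Nρ) and a*_N = (ln(1+1/γ₂) − ln(1+1/γ₁))/(γ₂−γ₁). -/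
/-- The cooperative normalized payoff function: the explicit formula below the
cutoff `a*`, and `1` above it. -/
noncomputable def UstarFull (γ₁ γ₂ : ℝ) (a : ℝ) : ℝ :=
  if a < astarDef γ₁ γ₂ then
    (γ₂ * Real.exp (-γ₁ * (astarDef γ₁ γ₂ - a))
      - γ₁ * Real.exp (-γ₂ * (astarDef γ₁ γ₂ - a))) / (γ₂ - γ₁)
  else 1

/-!
Both payoffs solve `U'' = c U + θ U'` with `c = 1/(Nρ)`, `U(a*) = 1`, `U'(a*) = 0` and
`U'(0) = -U(0)`. For two such solutions with `c₂ < c₁`, the weighted Wronskian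
`e^{-θa} (U₂' U₁ - U₁' U₂)` vanishes at `0` and has derivative `(c₂ - c₁) e^{-θa} U₁ U₂ < 0`,
so it is negative on `(0, ∞)`. Evaluated at `a*_{N₂}` this forces `a*_{N₁} ≤ a*_{N₂}`; on
`[0, a*_{N₁}]` it makes `U₂ / U₁` decreasing, and since this ratio is `U₂(a*_{N₁}) ≥ 1` at
the right end, `U₁ ≤ U₂` there. Beyond `a*_{N₁}`, `U₁ = 1 ≤ U₂`.
-/

open Real Set

section Wronskian

variable {θ c₁ c₂ : ℝ} {u₁ u₂ v₁ v₂ : ℝ → ℝ}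

theorem wronskian_neg_of_lt
    (hu₁ : ∀ x, HasDerivAt u₁ (v₁ x) x) (hu₂ : ∀ x, HasDerivAt u₂ (v₂ x) x)
    (hv₁ : ∀ x, HasDerivAt v₁ (c₁ * u₁ x + θ * v₁ x) x)
    (hv₂ : ∀ x, HasDerivAt v₂ (c₂ * u₂ x + θ * v₂ x) x)
    (hpos : ∀ x > 0, 0 < u₁ x * u₂ x) (hc : c₂ < c₁) (h₀ : v₂ 0 * u₁ 0 = v₁ 0 * u₂ 0)
    {a : ℝ} (ha : 0 < a) : v₂ a * u₁ a - v₁ a * u₂ a < 0 := by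
  set Φ : ℝ → ℝ := fun x ↦ exp (-(θ * x)) * (v₂ x * u₁ x - v₁ x * u₂ x)
  have hΦ : ∀ x, HasDerivAt Φ (exp (-(θ * x)) * ((c₂ - c₁) * (u₁ x * u₂ x))) x := fun x ↦ by
    have hlin : HasDerivAt (fun y ↦ -(θ * y)) (-θ) x := by
      simpa using ((hasDerivAt_id x).const_mul θ).fun_neg
    refine (hlin.exp.fun_mul (((hv₂ x).fun_mul (hu₁ x)).fun_sub ((hv₁ x).fun_mul (hu₂ x))))
      |>.congr_deriv ?_
    ring
  have hanti : StrictAntiOn Φ (Ici 0) := by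
    refine strictAntiOn_of_deriv_neg (convex_Ici 0)
      (fun x _ ↦ (hΦ x).continuousAt.continuousWithinAt) fun x hx ↦ ?_
    rw [interior_Ici] at hx
    rw [(hΦ x).deriv]
    exact mul_neg_of_pos_of_neg (exp_pos _) (mul_neg_of_neg_of_pos (by linarith) (hpos x hx))
  have hΦa : Φ a < 0 := by
    have := hanti self_mem_Ici ha.le ha
    simpa [Φ, h₀] using this
  exact neg_of_mul_neg_right hΦa (exp_pos _).le

theorem le_of_wronskian_nonpos {s t : ℝ}
    (hu₁ : ∀ x, HasDerivAt u₁ (v₁ x) x) (hu₂ : ∀ x, HasDerivAt u₂ (v₂ x) x)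
    (hpos : ∀ x ∈ Icc s t, 0 < u₁ x) (hW : ∀ x ∈ Ioo s t, v₂ x * u₁ x - v₁ x * u₂ x ≤ 0)
    (ht : u₁ t ≤ u₂ t) {x : ℝ} (hx : x ∈ Icc s t) : u₁ x ≤ u₂ x := by
  have hratio : ∀ y ∈ Icc s t, HasDerivAt (fun y ↦ u₂ y / u₁ y)
      ((v₂ y * u₁ y - u₂ y * v₁ y) / u₁ y ^ 2) y :=
    fun y hy ↦ (hu₂ y).fun_div (hu₁ y) (hpos y hy).ne'
  have hanti : AntitoneOn (fun y ↦ u₂ y / u₁ y) (Icc s t) := by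
    refine antitoneOn_of_deriv_nonpos (convex_Icc s t)
      (fun y hy ↦ (hratio y hy).continuousAt.continuousWithinAt)
      (fun y hy ↦ (hratio y (Ioo_subset_Icc_self (by rwa [interior_Icc] at hy))).differentiableAt
        |>.differentiableWithinAt) fun y hy ↦ ?_
    rw [interior_Icc] at hy
    rw [(hratio y (Ioo_subset_Icc_self hy)).deriv]
    exact div_nonpos_of_nonpos_of_nonneg (by linarith [hW y hy]) (sq_nonneg _)
  have ht_mem : t ∈ Icc s t := ⟨hx.1.trans hx.2, le_rfl⟩
  have hle := hanti hx ht_mem hx.2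
  have hut := hpos t ht_mem
  have hux := hpos x hx
  have : 1 ≤ u₂ x / u₁ x := le_trans ((one_le_div hut).2 ht) hle
  rwa [one_le_div hux] at this

end Wronskian

section CoopPayoff

variable {p q : ℝ}

noncomputable def coopPayoff (p q A a : ℝ) : ℝ :=
  (q * exp (p * (a - A)) - p * exp (q * (a - A))) / (q - p)

noncomputable def coopPayoffDeriv (p q A a : ℝ) : ℝ :=
  p * q * (exp (p * (a - A)) - exp (q * (a - A))) / (q - p)

theorem UstarFull_eq_ite (p q a : ℝ) :
    UstarFull p q a = if a < astarDef p q then coopPayoff p q (astarDef p q) a else 1 := by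
  simp only [UstarFull, coopPayoff, neg_mul_comm, neg_sub]

theorem hasDerivAt_exp_mul_sub (p A a : ℝ) :
    HasDerivAt (fun a ↦ exp (p * (a - A))) (exp (p * (a - A)) * p) a := by
  simpa using (((hasDerivAt_id a).sub_const A).const_mul p).exp

theorem hasDerivAt_coopPayoff (p q A a : ℝ) :
    HasDerivAt (coopPayoff p q A) (coopPayoffDeriv p q A a) a := by
  refine (((hasDerivAt_exp_mul_sub p A a).const_mul q).fun_sub
    ((hasDerivAt_exp_mul_sub q A a).const_mul p)).div_const (q - p) |>.congr_deriv ?_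
  simp only [coopPayoffDeriv]
  ring

theorem hasDerivAt_coopPayoffDeriv (p q A a : ℝ) :
    HasDerivAt (coopPayoffDeriv p q A)
      (-(p * q) * coopPayoff p q A a + (p + q) * coopPayoffDeriv p q A a) a := by
  refine (((hasDerivAt_exp_mul_sub p A a).fun_sub (hasDerivAt_exp_mul_sub q A a)).const_mul
    (p * q)).div_const (q - p) |>.congr_deriv ?_
  simp only [coopPayoff, coopPayoffDeriv]
  ring

theorem coopPayoff_self (hpq : p ≠ q) (A : ℝ) : coopPayoff p q A A = 1 := by
  simp [coopPayoff, div_self (sub_ne_zero.2 hpq.symm)]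

theorem coopPayoffDeriv_self (p q A : ℝ) : coopPayoffDeriv p q A A = 0 := by
  simp [coopPayoffDeriv]

theorem one_le_coopPayoff (hp : p < 0) (hq : 0 < q) (A a : ℝ) : 1 ≤ coopPayoff p q A a := by
  have hp' := add_one_le_exp (p * (a - A))
  have hq' := add_one_le_exp (q * (a - A))
  rw [coopPayoff, le_div_iff₀ (by linarith)]
  nlinarith [mul_le_mul_of_nonneg_left hp' hq.le, mul_le_mul_of_nonneg_left hq' (neg_nonneg.2 hp.le)]

theorem coopPayoffDeriv_neg (hp : p < 0) (hq : 0 < q) {A a : ℝ} (ha : a < A) :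
    coopPayoffDeriv p q A a < 0 := by
  have hexp : exp (q * (a - A)) < exp (p * (a - A)) := exp_lt_exp.2 (by nlinarith)
  exact div_neg_of_neg_of_pos
    (mul_neg_of_neg_of_pos (mul_neg_of_neg_of_pos hp hq) (by linarith)) (by linarith)

end CoopPayoff

section Cutoff

variable {p q : ℝ}

theorem one_add_inv_pos_of_lt_neg_one (hp : p < -1) : 0 < 1 + 1 / p := by
  have : -1 < 1 / p := by rw [lt_div_iff_of_neg (by linarith)]; linarith
  linarith

theorem astarDef_pos (hp : p < -1) (hq : 0 < q) : 0 < astarDef p q := by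
  have hlog_q : 0 < log (1 + 1 / q) := log_pos (by linarith [one_div_pos.2 hq])
  have hlog_p : log (1 + 1 / p) < 0 :=
    log_neg (one_add_inv_pos_of_lt_neg_one hp) (by linarith [one_div_neg.2 (by linarith : p < 0)])
  exact div_pos (by linarith) (by linarith)

theorem exp_mul_astarDef (hp : p < -1) (hq : 0 < q) :
    exp ((q - p) * astarDef p q) = (1 + 1 / q) / (1 + 1 / p) := by
  have hpq : q - p ≠ 0 := by linarith
  rw [astarDef, mul_div_cancel₀ _ hpq, exp_sub, exp_log (by positivity),
    exp_log (one_add_inv_pos_of_lt_neg_one hp)]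

/-- The formula for `a*` is the solution `A` of the boundary condition `U'(0) = -U(0)`. -/
theorem coopPayoffDeriv_zero_astarDef (hp : p < -1) (hq : 0 < q) :
    coopPayoffDeriv p q (astarDef p q) 0 = -coopPayoff p q (astarDef p q) 0 := by
  have hsplit : exp (p * (0 - astarDef p q)) =
      (1 + 1 / q) / (1 + 1 / p) * exp (q * (0 - astarDef p q)) := by
    rw [← exp_mul_astarDef hp hq, ← exp_add]
    ring_nf
  have hp0 : p ≠ 0 := by linarith
  have hp1 : p + 1 ≠ 0 := by linarith
  have hqp : q - p ≠ 0 := by linarith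
  rw [coopPayoffDeriv, coopPayoff, hsplit]
  field_simp
  ring

end Cutoff

theorem UstarFull_le_UstarFull {p₁ q₁ p₂ q₂ : ℝ} (hp₁ : p₁ < -1) (hq₁ : 0 < q₁) (hp₂ : p₂ < -1) (hq₂ : 0 < q₂)
    (hsum : p₁ + q₁ = p₂ + q₂) (hmul : p₁ * q₁ < p₂ * q₂) {a : ℝ} (ha : 0 ≤ a) :
    UstarFull p₁ q₁ a ≤ UstarFull p₂ q₂ a := by
  set A := astarDef p₁ q₁
  set B := astarDef p₂ q₂
  set u₁ := coopPayoff p₁ q₁ A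
  set u₂ := coopPayoff p₂ q₂ B
  set v₁ := coopPayoffDeriv p₁ q₁ A
  set v₂ := coopPayoffDeriv p₂ q₂ B
  have hu₁ : ∀ x, 1 ≤ u₁ x := one_le_coopPayoff (by linarith) hq₁ A
  have hu₂ : ∀ x, 1 ≤ u₂ x := one_le_coopPayoff (by linarith) hq₂ B
  have hW : ∀ x > 0, v₂ x * u₁ x - v₁ x * u₂ x < 0 := fun x hx ↦
    wronskian_neg_of_lt (θ := p₁ + q₁) (hasDerivAt_coopPayoff _ _ _)
      (hasDerivAt_coopPayoff _ _ _) (hasDerivAt_coopPayoffDeriv _ _ _)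
      (hsum ▸ hasDerivAt_coopPayoffDeriv _ _ _)
      (fun x _ ↦ mul_pos (one_pos.trans_le (hu₁ x)) (one_pos.trans_le (hu₂ x)))
      (neg_lt_neg hmul)
      (by rw [coopPayoffDeriv_zero_astarDef hp₁ hq₁, coopPayoffDeriv_zero_astarDef hp₂ hq₂]; ring)
      hx
  have hAB : A ≤ B := by
    by_contra! hBA
    have hWB := hW B (astarDef_pos hp₂ hq₂)
    have hv₂B : v₂ B = 0 := coopPayoffDeriv_self _ _ _
    have hu₂B : u₂ B = 1 := coopPayoff_self (by linarith) _
    have hv₁B : v₁ B < 0 := coopPayoffDeriv_neg (by linarith) hq₁ hBA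
    rw [hv₂B, hu₂B] at hWB
    linarith
  rw [UstarFull_eq_ite, UstarFull_eq_ite]
  by_cases haA : a < A
  · rw [if_pos haA, if_pos (haA.trans_le hAB)]
    refine le_of_wronskian_nonpos (hasDerivAt_coopPayoff _ _ _) (hasDerivAt_coopPayoff _ _ _)
      (fun x _ ↦ one_pos.trans_le (hu₁ x)) (fun x hx ↦ (hW x hx.1).le) ?_ ⟨ha, haA.le⟩
    calc u₁ A = 1 := coopPayoff_self (by linarith) _
      _ ≤ u₂ A := hu₂ A
  · rw [if_neg haA]
    split_ifs
    exacts [hu₂ a, le_rfl]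

theorem add_eq_and_mul_eq_of_roots {θ c γ₁ γ₂ : ℝ} (hlt : γ₁ < γ₂)
    (h₁ : γ₁ * (γ₁ - θ) = c) (h₂ : γ₂ * (γ₂ - θ) = c) : γ₁ + γ₂ = θ ∧ γ₁ * γ₂ = -c := by
  have hsum : γ₁ + γ₂ = θ := by
    have h : (γ₁ - γ₂) * (γ₁ + γ₂ - θ) = 0 := by linear_combination h₁ - h₂
    linarith [(mul_eq_zero.1 h).resolve_left (sub_ne_zero.2 hlt.ne)]
  exact ⟨hsum, by linear_combination γ₁ * hsum - h₁⟩

/-- `1 + θ < c` is the condition `Nρ(1 + θ) < 1`. -/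
theorem roots_lt_neg_one_and_pos {θ c γ₁ γ₂ : ℝ} (hlt : γ₁ < γ₂) (hc : 0 < c) (hθ : 1 + θ < c)
    (h₁ : γ₁ * (γ₁ - θ) = c) (h₂ : γ₂ * (γ₂ - θ) = c) : γ₁ < -1 ∧ 0 < γ₂ := by
  obtain ⟨hsum, hmul⟩ := add_eq_and_mul_eq_of_roots hlt h₁ h₂
  have hq : 0 < γ₂ := by nlinarith
  refine ⟨?_, hq⟩
  nlinarith

/-- Fixing `ρ > 0` and `θ`, for team sizes `N₁ < N₂` with
Assumption 1 holding at `N₂`, the cooperative normalized payoffs satisfy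
`U*_{N₁}(a) ≤ U*_{N₂}(a)` for all `a ≥ 0`, where for each `N` the roots
`γ₁ < γ₂` solve `γ(γ−θ) = 1/(Nρ)`. -/
theorem cooperative_value_monotone_in_N (ρ θ N₁ N₂ γ₁ γ₂ δ₁ δ₂ : ℝ)
    (hρ : 0 < ρ) (hN₁ : 1 ≤ N₁) (hN : N₁ < N₂)
    (hmain₂ : N₂ * ρ * (1 + θ) < 1)
    (hlt : γ₁ < γ₂) (hlt' : δ₁ < δ₂)
    (hroot1 : γ₁ * (γ₁ - θ) = 1 / (N₁ * ρ))
    (hroot2 : γ₂ * (γ₂ - θ) = 1 / (N₁ * ρ))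
    (hroot1' : δ₁ * (δ₁ - θ) = 1 / (N₂ * ρ))
    (hroot2' : δ₂ * (δ₂ - θ) = 1 / (N₂ * ρ)) :
    ∀ a : ℝ, 0 ≤ a → UstarFull γ₁ γ₂ a ≤ UstarFull δ₁ δ₂ a := by
  have hN₁ρ : 0 < N₁ * ρ := by positivity
  have hN₂ρ : 0 < N₂ * ρ := mul_pos (by linarith) hρ
  have hc : 1 / (N₂ * ρ) < 1 / (N₁ * ρ) := one_div_lt_one_div_of_lt hN₁ρ (by nlinarith)
  have hθ : 1 + θ < 1 / (N₂ * ρ) := by rw [lt_div_iff₀ hN₂ρ]; linarith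
  obtain ⟨hγ₁, hγ₂⟩ :=
    roots_lt_neg_one_and_pos hlt (by positivity) (hθ.trans hc) hroot1 hroot2
  obtain ⟨hδ₁, hδ₂⟩ := roots_lt_neg_one_and_pos hlt' (by positivity) hθ hroot1' hroot2'
  obtain ⟨hsumγ, hmulγ⟩ := add_eq_and_mul_eq_of_roots hlt hroot1 hroot2
  obtain ⟨hsumδ, hmulδ⟩ := add_eq_and_mul_eq_of_roots hlt' hroot1' hroot2'
  intro a ha
  exact UstarFull_le_UstarFull hγ₁ hγ₂ hδ₁ hδ₂ (hsumγ.trans hsumδ.symm) (by linarith) ha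
end
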